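/- arXiv:0705.3803 — 11 statements merged into one kernel-verified Lean document; each statement's English description precedes it below -/
import Mathlib

section
/- In an upper semilattice A with a binary operation →, the condition 'z ≤ x → y if and only if (z ∨ y) ∧ (x ∨ y) exists and equals y' holds for all x, y, z if and only if for all x, y: x → y equals (x ∨ y) * y, where * denotes sectional pseudocomplementation (i.e., for y ≤ x, x * y is the pseudocomplement of x in the filter [y), meaning for all u ≥ y: u ≤ x * y iff the only lower bound of u and x in [y) is y). -/
lemma glb_pair_iff {A : Type*} [SemilatticeSup A] {a b y : A}
    (ha : y ≤ a) (hb : y ≤ b) :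
    IsGLB ({a, b} : Set A) y ↔ ∀ v, y ≤ v → v ≤ a → v ≤ b → v = y := by
  constructor
  · rintro ⟨-, hg⟩ v hyv hva hvb
    exact le_antisymm (hg (by rintro w (rfl | rfl) <;> [exact hva; simp_all])) hyv
  · intro h
    constructor
    · rintro w (rfl | rfl) <;> simp_all
    · intro v hv
      have hva : v ≤ a := hv (by simp)
      have hvb : v ≤ b := hv (by simp)
      have := h (v ⊔ y) le_sup_right (sup_le hva ha) (sup_le hvb hb)
      exact le_sup_left.trans this.le

/-- In an upper semilattice `A` (with top), a binary operation `→` (here `op`)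
satisfies `z ≤ x → y ↔ (z ∨ y) ⊓ (x ∨ y) exists and equals y` for all `x, y, z`
iff for all `x, y`, `x → y` equals the sectional pseudocomplement `(x ∨ y) * y`,
i.e. `op x y ∈ [y)` and for all `u ∈ [y)`: `u ≤ op x y` iff the only common lower
bound of `u` and `x ∨ y` in `[y)` is `y`. -/
theorem stmt0 {A : Type*} [SemilatticeSup A] [OrderTop A] (op : A → A → A) :
    (∀ x y z : A, z ≤ op x y ↔ IsGLB ({z ⊔ y, x ⊔ y} : Set A) y) ↔
    (∀ x y : A, y ≤ op x y ∧
      ∀ u, y ≤ u → (u ≤ op x y ↔ ∀ v, y ≤ v → v ≤ u → v ≤ x ⊔ y → v = y)) := by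
  constructor
  · intro H x y
    have hy : y ≤ op x y := by
      rw [H, sup_idem]
      exact (glb_pair_iff le_rfl le_sup_right).2 fun v _ hv _ =>
        le_antisymm hv ‹y ≤ v›
    refine ⟨hy, fun u hu => ?_⟩
    rw [H]
    rw [sup_eq_left.2 hu]
    exact glb_pair_iff hu le_sup_right
  · intro H x y z
    obtain ⟨hy, hu⟩ := H x y
    have h1 : z ≤ op x y ↔ z ⊔ y ≤ op x y := by
      constructor
      · exact fun h => sup_le h hy
      · exact fun h => le_sup_left.trans h
    rw [h1, hu (z ⊔ y) le_sup_right, glb_pair_iff le_sup_right le_sup_right]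
end

section
/- A binary operation → on a join-semilattice A satisfies 'z ≤ x → y iff the meet of (z ∨ y) and (x ∨ y) exists and equals y' (for all x, y, z) if and only if → satisfies the three conditions: (exchange) if x ≤ y → z then y ≤ x → z; (weak contraction) if x ≤ x → y then x ≤ y; (compatibility) if x ⊓ y exists then x ≤ y → (x ⊓ y). -/
/-- On a join-semilattice, `op` satisfies
`z ≤ op x y ↔ the meet of (z ∨ y) and (x ∨ y) exists and equals y` (for all x,y,z)
iff `op` satisfies exchange, weak contraction, and compatibility. -/
theorem stmt2 {A : Type*} [SemilatticeSup A] (op : A → A → A) :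
    (∀ x y z : A, z ≤ op x y ↔ IsGLB ({z ⊔ y, x ⊔ y} : Set A) y) ↔
    ((∀ x y z : A, x ≤ op y z → y ≤ op x z) ∧
     (∀ x y : A, x ≤ op x y → x ≤ y) ∧
     (∀ x y m : A, IsGLB ({x, y} : Set A) m → x ≤ op y m)) := by
  constructor
  · intro H
    refine ⟨?_, ?_, ?_⟩
    · intro x y z h
      rw [H x z y]
      rw [H y z x] at h
      rwa [Set.pair_comm]
    · intro x y h
      rw [H x y x] at h
      have h1 : x ⊔ y ∈ lowerBounds ({x ⊔ y, x ⊔ y} : Set A) := by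
        intro w hw
        rcases hw with rfl | rfl <;> rfl
      have := h.2 h1
      exact le_trans le_sup_left this
    · intro x y m hm
      rw [H y m x]
      have hx : x ⊔ m = x := sup_eq_left.2 (hm.1 (Set.mem_insert _ _))
      have hy : y ⊔ m = y := sup_eq_left.2 (hm.1 (Set.mem_insert_of_mem _ rfl))
      rwa [hx, hy]
  · rintro ⟨E, W, C⟩ x y z
    -- key lemma 1
    have L1 : ∀ a b c : A, a ≤ op (b ⊔ c) c → a ≤ op b c := by
      intro a b c h
      have h1 : b ⊔ c ≤ op a c := E _ _ _ h
      have h2 : b ≤ op a c := le_trans le_sup_left h1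
      exact E _ _ _ h2
    -- key lemma 2 : y ≤ op x y always
    have L2 : ∀ b c : A, c ≤ op b c := by
      intro b c
      have hglb : IsGLB ({c, b ⊔ c} : Set A) c := by
        constructor
        · intro w hw
          rcases hw with rfl | rfl
          · exact le_refl _
          · exact le_sup_right
        · intro w hw
          exact hw (Set.mem_insert _ _)
      exact L1 _ _ _ (C _ _ _ hglb)
    constructor
    · intro h
      constructor
      · intro w hw
        rcases hw with rfl | rfl <;> exact le_sup_right
      · intro w hw
        have hw1 : w ≤ z ⊔ y := hw (Set.mem_insert _ _)
        have hw2 : w ≤ x ⊔ y := hw (Set.mem_insert_of_mem _ rfl)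
        have h1 : z ⊔ y ≤ op x y := sup_le h (L2 x y)
        have h2 : x ≤ op (z ⊔ y) y := E _ _ _ h1
        have h3 : x ⊔ y ≤ op (z ⊔ y) y := sup_le h2 (L2 _ _)
        have h4 : z ⊔ y ≤ op (x ⊔ y) y := E _ _ _ h3
        have h5 : w ⊔ y ≤ op (x ⊔ y) y :=
          le_trans (sup_le hw1 le_sup_right) h4
        have h6 : x ⊔ y ≤ op (w ⊔ y) y := E _ _ _ h5
        have h7 : w ⊔ y ≤ op (w ⊔ y) y :=
          le_trans (sup_le hw2 le_sup_right) h6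
        exact le_trans le_sup_left (W _ _ h7)
    · intro h
      have := C _ _ _ h
      exact le_trans le_sup_left (L1 _ _ _ this)
end

section
/- If A is a poset with greatest element 1 and → is a binary operation satisfying (to1): x ≤ y → z implies y ≤ x → z, (to2): x ≤ x → y implies x ≤ y, and (to3): if the meet x ⊓ y exists then x ≤ y → (x ⊓ y), then for all x, y: x ≤ y if and only if x → y = 1. -/
/-- In a poset with greatest element `⊤` (playing the role of 1), if `op`
satisfies exchange, weak contraction, and compatibility (for existing meets), then
`x ≤ y ↔ op x y = ⊤`. -/
theorem stmt3 {A : Type*} [PartialOrder A] [OrderTop A] (op : A → A → A)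
    (h1 : ∀ x y z : A, x ≤ op y z → y ≤ op x z)
    (h2 : ∀ x y : A, x ≤ op x y → x ≤ y)
    (h3 : ∀ x y m : A, IsGLB ({x, y} : Set A) m → x ≤ op y m) :
    ∀ x y : A, x ≤ y ↔ op x y = ⊤ := by
  intro x y
  constructor
  · intro hxy
    have hglb : IsGLB ({⊤, y} : Set A) y := by
      constructor
      · intro a ha
        rcases ha with rfl | rfl
        · exact le_top
        · exact le_refl _
      · intro b hb
        exact hb (by simp)
    have h4 : (⊤ : A) ≤ op y y := h3 ⊤ y y hglb
    have h5 : y ≤ op ⊤ y := h1 ⊤ y y h4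
    have h6 : x ≤ op ⊤ y := le_trans hxy h5
    exact top_le_iff.mp (h1 x ⊤ y h6)
  · intro h
    exact h2 x y (h ▸ le_top)
end

section
/- In a wBCK*-algebra, ((x → y) → y) → y = x → y for all x, y. -/
/-- In a wBCK*-algebra, ((x → y) → y) → y = x → y. -/
theorem stmt6 {A : Type*} [PartialOrder A] [OrderTop A] (op : A → A → A)
    (hle : ∀ x y : A, x ≤ y ↔ op x y = ⊤)
    (hex : ∀ x y z : A, x ≤ op y z → y ≤ op x z) :
    ∀ x y : A, op (op (op x y) y) y = op x y := by
  intro x y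
  have refl1 : op x y ≤ op x y := le_refl _
  -- x ≤ (x→y)→y
  have h1 : x ≤ op (op x y) y := hex _ _ _ refl1
  -- x→y ≤ ((x→y)→y)→y
  have h2 : op x y ≤ op (op (op x y) y) y := hex _ _ _ (le_refl (op (op x y) y))
  -- (x→y)→y ≤ (((x→y)→y)→y)→y
  have h3 : op (op x y) y ≤ op (op (op (op x y) y) y) y :=
    hex _ _ _ (le_refl (op (op (op x y) y) y))
  have h4 : x ≤ op (op (op (op x y) y) y) y := le_trans h1 h3
  have h5 : op (op (op x y) y) y ≤ op x y := hex _ _ _ h4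
  exact le_antisymm h5 h2
end

section
/- In a wBCK*-algebra (A, →, 1), for all x, y: x → y is the maximum of the set { z → y : x ≤ z and y ≤ z }. Consequently the operation → is uniquely determined by its restriction to pairs (z, y) with y ≤ z. -/
lemma stmt9_aux {A : Type*} [PartialOrder A] [OrderTop A] (op : A → A → A)
    (hle : ∀ x y : A, x ≤ y ↔ op x y = ⊤)
    (hex : ∀ x y z : A, x ≤ op y z → y ≤ op x z) :
    ∀ x y : A, IsGreatest {w | ∃ z, x ≤ z ∧ y ≤ z ∧ w = op z y} (op x y) := by
  intro x y
  constructor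
  · refine ⟨op (op x y) y, hex (op x y) x y le_rfl, ?_, ?_⟩
    · exact hex (op x y) y y (le_of_le_of_eq le_top ((hle y y).mp le_rfl).symm)
    · -- op x y = op (op (op x y) y) y
      have h1 : op x y ≤ op (op (op x y) y) y :=
        hex (op (op x y) y) (op x y) y le_rfl
      have h2 : op (op (op x y) y) y ≤ op x y := by
        have hx : x ≤ op (op x y) y := hex (op x y) x y le_rfl
        exact hex x (op (op (op x y) y) y) y
          (hx.trans (hex (op (op (op x y) y) y) (op (op x y) y) y le_rfl))
      exact le_antisymm h1 h2
  · rintro w ⟨z, hxz, _, rfl⟩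
    have hz : z ≤ op (op z y) y := hex (op z y) z y le_rfl
    exact hex x (op z y) y (le_trans hxz hz)

/-- In a wBCK*-algebra, x → y is the maximum of { z → y : x ≤ z, y ≤ z };
consequently → is determined by its restriction to pairs (z, y) with y ≤ z. -/
theorem stmt9 {A : Type*} [PartialOrder A] [OrderTop A] (op : A → A → A)
    (hle : ∀ x y : A, x ≤ y ↔ op x y = ⊤)
    (hex : ∀ x y z : A, x ≤ op y z → y ≤ op x z)
    (op' : A → A → A)
    (hle' : ∀ x y : A, x ≤ y ↔ op' x y = ⊤)
    (hex' : ∀ x y z : A, x ≤ op' y z → y ≤ op' x z)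
    (hagree : ∀ z y : A, y ≤ z → op z y = op' z y) :
    (∀ x y : A, IsGreatest {w | ∃ z, x ≤ z ∧ y ≤ z ∧ w = op z y} (op x y)) ∧
    (∀ x y : A, op x y = op' x y) := by
  refine ⟨stmt9_aux op hle hex, fun x y => ?_⟩
  have hset : {w | ∃ z, x ≤ z ∧ y ≤ z ∧ w = op z y}
      = {w | ∃ z, x ≤ z ∧ y ≤ z ∧ w = op' z y} := by
    ext w
    constructor <;> rintro ⟨z, h1, h2, rfl⟩
    · exact ⟨z, h1, h2, hagree z y h2⟩
    · exact ⟨z, h1, h2, (hagree z y h2).symm⟩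
  have g1 := stmt9_aux op hle hex x y
  have g2 := stmt9_aux op' hle' hex' x y
  rw [hset] at g1
  exact g1.unique g2
end

section
/- For a binary operation → on a poset A with top element 1, the exchange condition 'x ≤ y → z implies y ≤ x → z' (together with x ≤ y iff x → y = 1) is equivalent to the conjunction of 'x ≤ (x → y) → y' and 'x ≤ y implies y → z ≤ x → z'. -/
/-- Given `x ≤ y ↔ op x y = ⊤`, the exchange condition is equivalent to
the conjunction of `x ≤ (x → y) → y` and antitonicity in the first argument. -/
theorem stmt10 {A : Type*} [PartialOrder A] [OrderTop A] (op : A → A → A)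
    (hle : ∀ x y : A, x ≤ y ↔ op x y = ⊤) :
    (∀ x y z : A, x ≤ op y z → y ≤ op x z) ↔
      ((∀ x y : A, x ≤ op (op x y) y) ∧ (∀ x y z : A, x ≤ y → op y z ≤ op x z)) := by
  constructor
  · intro h
    refine ⟨fun x y => h (op x y) x y le_rfl, fun x y z hxy => ?_⟩
    exact h x (op y z) z (hxy.trans (h (op y z) y z le_rfl))
  · rintro ⟨h1, h2⟩ x y z hx
    exact (h1 y z).trans (h2 x (op y z) z hx)
end

section
/- Let A be a poset with greatest element 1 and → a binary operation on A. Then → is a relative pseudocomplementation (i.e., satisfies: (i) if u ≤ x → y and v ≤ x and v ≤ u then v ≤ y; and (ii) if every common lower bound of x and u is ≤ y, then u ≤ x → y) if and only if → satisfies: (exchange) x ≤ y → z implies y ≤ x → z; (weak contraction) x ≤ x → y implies x ≤ y; and condition (ii). -/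
/-- `op` is a relative pseudocomplementation iff it satisfies exchange,
weak contraction, and condition (ii). -/
theorem stmt11 {A : Type*} [PartialOrder A] [OrderTop A] (op : A → A → A) :
    ((∀ u x y v : A, u ≤ op x y → v ≤ x → v ≤ u → v ≤ y) ∧
     (∀ x y u : A, (∀ v, v ≤ x → v ≤ u → v ≤ y) → u ≤ op x y)) ↔
    ((∀ x y z : A, x ≤ op y z → y ≤ op x z) ∧
     (∀ x y : A, x ≤ op x y → x ≤ y) ∧
     (∀ x y u : A, (∀ v, v ≤ x → v ≤ u → v ≤ y) → u ≤ op x y)) := by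
  constructor
  · rintro ⟨h1, h2⟩
    refine ⟨fun x y z hx => h2 _ _ _ fun v hvx hvy => h1 x y z v hx hvy hvx,
      fun x y hx => h1 x x y x hx le_rfl le_rfl, h2⟩
  · rintro ⟨hex, hwc, h2⟩
    refine ⟨fun u x y v hu hvx hvu => ?_, h2⟩
    exact hwc v y (hvx.trans (hex v x y (hvu.trans hu)))
end

section
/- A sectionally j-pseudocomplemented meet-semilattice (A, →, 1) is relatively pseudocomplemented if and only if → is isotone in the second argument: x ≤ y implies z → x ≤ z → y. -/
/-- A sectionally j-pseudocomplemented meet-semilattice is relatively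
pseudocomplemented iff `→` is isotone in the second argument. -/
theorem stmt12 {A : Type*} [SemilatticeInf A] [OrderTop A] (op : A → A → A)
    (hex : ∀ x y z : A, x ≤ op y z → y ≤ op x z)
    (hwc : ∀ x y : A, x ≤ op x y → x ≤ y)
    (hcomp : ∀ x y : A, x ≤ op y (x ⊓ y)) :
    (∀ u x y : A, u ≤ op x y ↔ x ⊓ u ≤ y) ↔
      (∀ x y z : A, x ≤ y → op z x ≤ op z y) := by
  constructor
  · intro hrp x y z hxy
    exact (hrp _ _ _).mpr (le_trans ((hrp _ _ _).mp le_rfl) hxy)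
  · intro hiso u x y
    constructor
    · intro h
      have hx : x ≤ op (x ⊓ u) y := hex _ _ _ (le_trans inf_le_right h)
      exact hwc _ _ (le_trans inf_le_left hx)
    · intro h
      exact le_trans (hcomp u x) (hiso _ _ _ (le_trans (le_of_eq (inf_comm u x)) h))
end

section
/- Let (·, →) be an adjunction on a poset A (x ≤ y → z iff x·y ≤ z) and 1 ∈ A. Then (A, →, 1) is a wBCK*-algebra (x ≤ y iff x → y = 1, and x ≤ y → z implies y ≤ x → z) if and only if (A, ·, 1) is a commutative groupoid with neutral element 1 that is also the greatest element of A. -/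
/-- Given an adjunction (·, →) on a poset and an element `e` (the 1),
`(A, →, e)` is a wBCK*-algebra iff `(A, ·, e)` is a commutative groupoid with neutral
element `e` which is also the greatest element of `A`. -/
theorem stmt14 {A : Type*} [PartialOrder A] (mul : A → A → A) (op : A → A → A)
    (adj : ∀ x y z : A, x ≤ op y z ↔ mul x y ≤ z) (e : A) :
    ((∀ x : A, x ≤ e) ∧ (∀ x y : A, x ≤ y ↔ op x y = e) ∧
     (∀ x y z : A, x ≤ op y z → y ≤ op x z)) ↔
    ((∀ x y : A, mul x y = mul y x) ∧ (∀ x : A, mul x e = x) ∧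
     (∀ x : A, mul e x = x) ∧ (∀ x : A, x ≤ e)) := by
  constructor
  · rintro ⟨top, iff_e, exch⟩
    have comm : ∀ x y : A, mul x y = mul y x := by
      intro x y
      have key : ∀ a b : A, mul b a ≤ mul a b := by
        intro a b
        have h1 : a ≤ op b (mul a b) := (adj a b (mul a b)).2 le_rfl
        have h2 : b ≤ op a (mul a b) := exch a b (mul a b) h1
        exact (adj b a (mul a b)).1 h2
      exact le_antisymm (key y x) (key x y)
    have unit : ∀ x : A, mul x e = x := by
      intro x
      have h1 : x ≤ op e (mul x e) := (adj x e (mul x e)).2 le_rfl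
      have h2 : e ≤ op x (mul x e) := exch x e (mul x e) h1
      have h3 : op x (mul x e) = e := le_antisymm (top _) h2
      have hle : x ≤ mul x e := (iff_e x (mul x e)).2 h3
      -- mul x e ≤ x : from e ≤ op x x (since op x x = e) and exchange
      have h4 : op x x = e := (iff_e x x).1 le_rfl
      have h5 : x ≤ op e x := exch e x x (h4 ▸ le_rfl)
      have hge : mul x e ≤ x := (adj x e x).1 h5
      exact le_antisymm hge hle
    exact ⟨comm, unit, fun x => (comm e x).trans (unit x), top⟩
  · rintro ⟨comm, unitr, unitl, top⟩
    refine ⟨top, ?_, ?_⟩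
    · intro x y
      constructor
      · intro hxy
        have h : e ≤ op x y := (adj e x y).2 (by rw [unitl]; exact hxy)
        exact le_antisymm (top _) h
      · intro h
        have h2 : mul e x ≤ y := (adj e x y).1 (h ▸ le_rfl)
        rwa [unitl] at h2
    · intro x y z h
      have h1 : mul x y ≤ z := (adj x y z).1 h
      rw [comm] at h1
      exact (adj y x z).2 h1
end

section
/- Let (A, ∨, 1) be a join-semilattice with top element 1 and natural order ≤, and → a binary operation on A. Then (A, →, 1) is a wBCK*-algebra (x ≤ y iff x → y = 1, and x ≤ y → z implies y ≤ x → z) if and only if → satisfies: (i) x ≤ (x → y) → y; (ii) 1 → x = x; (iii) x → (x ∨ y) = 1; (iv) (x ∨ y) → z ≤ y → z. -/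
/-!
In a wBCK*-algebra, (i) is the exchange law applied to `x → y ≤ x → y`; (ii) and (iv) follow
from (i) by exchange again, and (iii) holds because `x ≤ x ∨ y`. Conversely, `x ≤ y` gives
`x → y = x → (x ∨ y) = 1` by (iii), while `x → y = 1` gives `x ≤ (x → y) → y = 1 → y = y`
by (i) and (ii); and if `x ≤ y → z`, then `(y → z) ∨ x = y → z`, so (i) and (iv) give
`y ≤ (y → z) → z ≤ x → z`.
-/

section WBCKStar

variable {A : Type*} {op : A → A → A}

theorem le_op_op_of_exchange [Preorder A] (hexch : ∀ x y z : A, x ≤ op y z → y ≤ op x z)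
    (x y : A) : x ≤ op (op x y) y :=
  hexch _ _ _ le_rfl

theorem top_op_eq_of_exchange [PartialOrder A] [OrderTop A]
    (hle : ∀ x y : A, x ≤ y ↔ op x y = ⊤) (hexch : ∀ x y z : A, x ≤ op y z → y ≤ op x z)
    (x : A) : op ⊤ x = x := by
  have hself : op x x = ⊤ := (hle x x).mp le_rfl
  refine le_antisymm ((hle _ _).mpr ?_) (hexch _ _ _ hself.ge)
  exact top_le_iff.mp (le_op_op_of_exchange hexch ⊤ x)

theorem op_sup_le_of_exchange [SemilatticeSup A] (hexch : ∀ x y z : A, x ≤ op y z → y ≤ op x z)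
    (x y z : A) : op (x ⊔ y) z ≤ op y z :=
  hexch _ _ _ (le_sup_right.trans (le_op_op_of_exchange hexch (x ⊔ y) z))

theorem le_iff_op_eq_top [SemilatticeSup A] [OrderTop A]
    (hi : ∀ x y : A, x ≤ op (op x y) y) (hii : ∀ x : A, op ⊤ x = x)
    (hiii : ∀ x y : A, op x (x ⊔ y) = ⊤) (x y : A) : x ≤ y ↔ op x y = ⊤ := by
  constructor
  · intro h
    simpa only [sup_eq_right.mpr h] using hiii x y
  · intro h
    simpa only [h, hii] using hi x y

theorem exchange_of_le_op_op [SemilatticeSup A]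
    (hi : ∀ x y : A, x ≤ op (op x y) y) (hiv : ∀ x y z : A, op (x ⊔ y) z ≤ op y z)
    {x y z : A} (h : x ≤ op y z) : y ≤ op x z := by
  have hyz : op (op y z) z ≤ op x z := by
    simpa only [sup_comm, sup_eq_right.mpr h] using hiv (op y z) x z
  exact (hi y z).trans hyz

end WBCKStar

/-- On a join-semilattice with top, `(A, →, ⊤)` is a wBCK*-algebra iff
`→` satisfies (i) x ≤ (x → y) → y, (ii) ⊤ → x = x, (iii) x → (x ∨ y) = ⊤,
(iv) (x ∨ y) → z ≤ y → z. -/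
theorem stmt18 {A : Type*} [SemilatticeSup A] [OrderTop A] (op : A → A → A) :
    ((∀ x y : A, x ≤ y ↔ op x y = ⊤) ∧ (∀ x y z : A, x ≤ op y z → y ≤ op x z)) ↔
    ((∀ x y : A, x ≤ op (op x y) y) ∧ (∀ x : A, op ⊤ x = x) ∧
     (∀ x y : A, op x (x ⊔ y) = ⊤) ∧ (∀ x y z : A, op (x ⊔ y) z ≤ op y z)) := by
  constructor
  · rintro ⟨hle, hexch⟩
    exact ⟨le_op_op_of_exchange hexch, top_op_eq_of_exchange hle hexch,
      fun x y => (hle _ _).mp le_sup_left, op_sup_le_of_exchange hexch⟩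
  · rintro ⟨hi, hii, hiii, hiv⟩
    exact ⟨le_iff_op_eq_top hi hii hiii, fun _ _ _ => exchange_of_le_op_op hi hiv⟩
end

section
/- The variety of lower wBCK*-semilattices is arithmetical: the term m(x,y,z) = ((x → y) → y) ⊓ ((y → z) → z) ⊓ ((z → x) → x) is a majority term (m(x,x,y) = m(x,y,x) = m(y,x,x) = x), and the term p(x,y,z) = ((x → y) → z) ⊓ ((z → y) → x) is a Mal'cev term (p(x,y,y) = x = p(y,y,x)). -/
/-- In any lower wBCK*-semilattice, the term
m(x,y,z) = ((x→y)→y) ⊓ ((y→z)→z) ⊓ ((z→x)→x) is a majority term, and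
p(x,y,z) = ((x→y)→z) ⊓ ((z→y)→x) is a Mal'cev term. Hence the variety is arithmetical. -/
theorem stmt19 {A : Type*} [SemilatticeInf A] [OrderTop A] (op : A → A → A)
    (hle : ∀ x y : A, x ≤ y ↔ op x y = ⊤)
    (hex : ∀ x y z : A, x ≤ op y z → y ≤ op x z) :
    (∀ x y : A,
      op (op x x) x ⊓ op (op x y) y ⊓ op (op y x) x = x ∧
      op (op x y) y ⊓ op (op y x) x ⊓ op (op x x) x = x ∧
      op (op y x) x ⊓ op (op x x) x ⊓ op (op x y) y = x) ∧
    (∀ x y : A,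
      op (op x y) y ⊓ op (op y y) x = x ∧ op (op y y) x ⊓ op (op x y) y = x) := by
  have hself : ∀ x : A, op x x = ⊤ := fun x => (hle x x).mp le_rfl
  have hge2 : ∀ a x : A, x ≤ op a x := fun a x =>
    hex a x x (by rw [hself]; exact le_top)
  have htop : ∀ x : A, op ⊤ x = x := by
    intro x
    have h2 : op ⊤ x ≤ x :=
      (hle _ _).mpr (top_le_iff.mp (hex (op ⊤ x) ⊤ x le_rfl))
    exact le_antisymm h2 (hge2 ⊤ x)
  have hxx : ∀ x : A, op (op x x) x = x := fun x => by rw [hself, htop]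
  have hge : ∀ x y : A, x ≤ op (op x y) y := fun x y => hex (op x y) x y le_rfl
  constructor
  · intro x y
    rw [hxx]
    refine ⟨?_, ?_, ?_⟩
    · exact le_antisymm (inf_le_left.trans inf_le_left)
        (le_inf (le_inf le_rfl (hge x y)) (hge2 _ x))
    · exact le_antisymm inf_le_right
        (le_inf (le_inf (hge x y) (hge2 _ x)) le_rfl)
    · exact le_antisymm (inf_le_left.trans inf_le_right)
        (le_inf (le_inf (hge2 _ x) le_rfl) (hge x y))
  · intro x y
    rw [hself, htop]
    exact ⟨le_antisymm inf_le_right (le_inf (hge x y) le_rfl),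
      le_antisymm inf_le_left (le_inf le_rfl (hge x y))⟩
end
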